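/- Let H = H₀ ⊕ H₁ be an orthogonal decomposition of a finite-dimensional inner product space and let X be a self-adjoint linear operator on H with blocks Xᵢⱼ. Write S = X₀₀ − X₀₁X₁₁⁺X₁₀ for the generalized Schur complement. Then the Moore–Penrose pseudoinverse X⁺ equals the block operator [[S⁺, −S⁺X₀₁X₁₁⁺],[−X₁₁⁺X₁₀S⁺, X₁₁⁺ + X₁₁⁺X₁₀S⁺X₀₁X₁₁⁺]] if and only if both ker X₁₁ ⊆ ker X₀₁ and ker S ⊆ ker X₁₀; and in that case (X⁺)₀₀ = S⁺ and S = ((X⁺)₀₀)⁺. -/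

import Mathlib

/-!
Everything is algebra in the star ring `Module.End 𝕂 H`. For a star projection `p`, the map
`y ↦ peirceMatrix p y = (pᵢ y pⱼ)ᵢⱼ` with `p₀ = p`, `p₁ = 1 - p` is injective, multiplicative and
star-preserving, so `X⁺` is the proposed operator iff the Banachiewicz matrix `N` is the
Moore–Penrose inverse of the self-adjoint block matrix `M = [[d, a], [a⋆, e]]` of `X`. With
`b = e⁺`, `S = d - a b a⋆` and `s = S⁺` one computes `M N = [[S s, n b], [m⋆ s, ⋯]]`, where
`n = a - S s a` and `m = a - a b e`. If `m = n = 0` the four Penrose equations are immediate.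
Conversely, the `(0,1)` entries of `M N M = M` and of `(M N)⋆ = M N` give `n b e = n` and
`s m = n b`; as `S n = 0`, this forces `m = m - S s m = n - n b e = 0`, hence `n b = 0` and
`n = n b e = 0`. Finally `ker f ≤ ker g ↔ g f⁺ f = g` turns `m = 0` and `n⋆ = 0` into the two
kernel inclusions.
-/

/-- The generalized Schur complement `X₀₀ - X₀₁ X₁₁⁺ X₁₀` of an operator `X` with respect
to orthogonal projections `P0, P1`, where `B` is the Moore–Penrose pseudoinverse of the
block `X₁₁ = P1 X P1`. -/
noncomputable def gschurLM {𝕂 : Type*} [RCLike 𝕂] {H : Type*} [NormedAddCommGroup H]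
    [InnerProductSpace 𝕂 H] (P0 P1 X B : H →ₗ[𝕂] H) : H →ₗ[𝕂] H :=
  (P0 ∘ₗ (X ∘ₗ P0)) - (P0 ∘ₗ (X ∘ₗ P1)) ∘ₗ (B ∘ₗ (P1 ∘ₗ (X ∘ₗ P0)))

section MoorePenrose

variable {R : Type*}

structure IsMoorePenroseInverse [Mul R] [Star R] (a b : R) : Prop where
  inv_mul_mul_inv : b * a * b = b
  mul_inv_mul : a * b * a = a
  isSelfAdjoint_inv_mul : IsSelfAdjoint (b * a)
  isSelfAdjoint_mul_inv : IsSelfAdjoint (a * b)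

theorem isMoorePenroseInverse_iff [Mul R] [Star R] {a b : R} :
    IsMoorePenroseInverse a b ↔ b * a * b = b ∧ a * b * a = a ∧ IsSelfAdjoint (b * a) ∧
      IsSelfAdjoint (a * b) :=
  ⟨fun h ↦ ⟨h.1, h.2, h.3, h.4⟩, fun h ↦ ⟨h.1, h.2.1, h.2.2.1, h.2.2.2⟩⟩

namespace IsMoorePenroseInverse

variable [Semigroup R] [StarMul R] {a b c : R}

protected theorem star (h : IsMoorePenroseInverse a b) :
    IsMoorePenroseInverse (star a) (star b) where
  inv_mul_mul_inv := by rw [← star_mul, ← star_mul, ← mul_assoc, h.inv_mul_mul_inv]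
  mul_inv_mul := by rw [← star_mul, ← star_mul, ← mul_assoc, h.mul_inv_mul]
  isSelfAdjoint_inv_mul := by
    rw [← star_mul]; exact IsSelfAdjoint.star_iff.mpr h.isSelfAdjoint_mul_inv
  isSelfAdjoint_mul_inv := by
    rw [← star_mul]; exact IsSelfAdjoint.star_iff.mpr h.isSelfAdjoint_inv_mul

theorem unique (hb : IsMoorePenroseInverse a b) (hc : IsMoorePenroseInverse a c) : b = c := by
  have hab : a * b = a * c :=
    calc a * b = star (a * c * a * b) := by rw [hc.mul_inv_mul, hb.isSelfAdjoint_mul_inv.star_eq]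
      _ = a * b * (a * c) := by
        rw [mul_assoc, star_mul, hb.isSelfAdjoint_mul_inv.star_eq, hc.isSelfAdjoint_mul_inv.star_eq]
      _ = a * c := by rw [← mul_assoc, hb.mul_inv_mul]
  have hba : b * a = c * a :=
    calc b * a = star (b * (a * c * a)) := by rw [hc.mul_inv_mul, hb.isSelfAdjoint_inv_mul.star_eq]
      _ = c * a * (b * a) := by
        rw [show b * (a * c * a) = b * a * (c * a) by simp only [mul_assoc], star_mul,
          hb.isSelfAdjoint_inv_mul.star_eq, hc.isSelfAdjoint_inv_mul.star_eq]
      _ = c * a := by rw [mul_assoc, ← mul_assoc a, hb.mul_inv_mul]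
  calc b = b * a * b := hb.inv_mul_mul_inv.symm
    _ = c * a * c := by rw [mul_assoc, hab, ← mul_assoc, hba]
    _ = c := hc.inv_mul_mul_inv

protected theorem isSelfAdjoint (ha : IsSelfAdjoint a) (h : IsMoorePenroseInverse a b) :
    IsSelfAdjoint b :=
  (h.unique (ha.star_eq ▸ h.star)).symm

theorem commute (ha : IsSelfAdjoint a) (h : IsMoorePenroseInverse a b) : Commute a b := by
  rw [commute_iff_eq, ← h.isSelfAdjoint_mul_inv.star_eq, star_mul, (h.isSelfAdjoint ha).star_eq,
    ha.star_eq]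

theorem mul_mul_eq_of_mul_mul_eq {q : R} (ha : IsSelfAdjoint a) (h : IsMoorePenroseInverse a b)
    (hq : IsIdempotentElem q) (hqa : q * a * q = a) : q * b * q = b := by
  have hqa' : q * a = a := by rw [← hqa, ← mul_assoc, ← mul_assoc, hq.eq]
  have haq : a * q = a := by rw [← hqa, mul_assoc, hq.eq]
  have hbba : b * b * a = b := by
    rw [mul_assoc, ← (h.commute ha).eq, ← mul_assoc, h.inv_mul_mul_inv]
  have habb : a * b * b = b := by rw [(h.commute ha).eq, h.inv_mul_mul_inv]
  have hqb : q * b = b := by rw [← habb, ← mul_assoc, ← mul_assoc, hqa']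
  have hbq : b * q = b := by rw [← hbba, mul_assoc, haq]
  rw [hqb, hbq]

end IsMoorePenroseInverse

end MoorePenrose

theorem LinearMap.ker_le_ker_iff_comp_eq {K M N P : Type*} [Ring K] [AddCommGroup M]
    [Module K M] [AddCommGroup N] [Module K N] [AddCommGroup P] [Module K P]
    {f : M →ₗ[K] N} {f' : N →ₗ[K] M} (g : M →ₗ[K] P) (hf : f ∘ₗ (f' ∘ₗ f) = f) :
    ker f ≤ ker g ↔ g ∘ₗ (f' ∘ₗ f) = g := by
  constructor
  · intro h
    ext v
    have hv : v - f' (f v) ∈ ker f := by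
      rw [mem_ker, map_sub, sub_eq_zero]
      exact (LinearMap.congr_fun hf v).symm
    have hgv := h hv
    rw [mem_ker, map_sub, sub_eq_zero] at hgv
    exact hgv.symm
  · intro h v hv
    rw [mem_ker] at hv ⊢
    rw [← h, comp_apply, comp_apply, hv, map_zero, map_zero]

namespace Matrix

variable {R : Type*}

section Ring
variable [Ring R]

def schurComplement (M : Matrix (Fin 2) (Fin 2) R) (b : R) : R := M 0 0 - M 0 1 * b * M 1 0

def banachiewicz (M : Matrix (Fin 2) (Fin 2) R) (b s : R) : Matrix (Fin 2) (Fin 2) R :=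
  !![s, -(s * M 0 1 * b); -(b * M 1 0 * s), b + b * M 1 0 * s * M 0 1 * b]

theorem fin_two_mul_banachiewicz (d a c e b s : R) :
    !![d, a; c, e] * banachiewicz !![d, a; c, e] b s =
      !![(d - a * b * c) * s, (a - (d - a * b * c) * s * a) * b;
        (c - e * b * c) * s, e * b - (c - e * b * c) * s * a * b] := by
  simp only [banachiewicz, of_apply, cons_val', cons_val_zero, cons_val_one, empty_val',
    cons_val_fin_one, mul_fin_two]
  congr 1
  noncomm_ring

end Ring

section StarRing
variable [Ring R] [StarRing R]

theorem star_fin_two (d a c e : R) :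
    star !![d, a; c, e] = !![star d, star c; star a, star e] := by
  ext i j
  fin_cases i <;> fin_cases j <;> rfl

theorem isSelfAdjoint_fin_two_iff {d a c e : R} :
    IsSelfAdjoint !![d, a; c, e] ↔ IsSelfAdjoint d ∧ star a = c ∧ IsSelfAdjoint e := by
  rw [IsSelfAdjoint, star_fin_two]
  constructor
  · intro h
    exact ⟨congr_fun₂ h 0 0, congr_fun₂ h 1 0, congr_fun₂ h 1 1⟩
  · rintro ⟨hd, rfl, he⟩
    rw [hd.star_eq, he.star_eq, star_star]

theorem isSelfAdjoint_schurComplement {M : Matrix (Fin 2) (Fin 2) R} {b : R}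
    (hM : IsSelfAdjoint M) (hb : IsSelfAdjoint b) : IsSelfAdjoint (schurComplement M b) := by
  obtain ⟨d, a, c, e, rfl⟩ : ∃ d a c e, M = !![d, a; c, e] := ⟨_, _, _, _, M.eta_fin_two⟩
  obtain ⟨hd, rfl, -⟩ := isSelfAdjoint_fin_two_iff.mp hM
  simp [schurComplement, IsSelfAdjoint, star_mul, hd.star_eq, hb.star_eq, mul_assoc]

theorem isSelfAdjoint_banachiewicz {M : Matrix (Fin 2) (Fin 2) R} {b s : R} (hM : IsSelfAdjoint M)
    (hb : IsSelfAdjoint b) (hs : IsSelfAdjoint s) : IsSelfAdjoint (banachiewicz M b s) := by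
  obtain ⟨d, a, c, e, rfl⟩ : ∃ d a c e, M = !![d, a; c, e] := ⟨_, _, _, _, M.eta_fin_two⟩
  obtain ⟨-, rfl, -⟩ := isSelfAdjoint_fin_two_iff.mp hM
  refine isSelfAdjoint_fin_two_iff.mpr ⟨hs, ?_, ?_⟩
  · simp [star_mul, hb.star_eq, hs.star_eq, mul_assoc]
  · simp [IsSelfAdjoint, star_mul, hb.star_eq, hs.star_eq, mul_assoc]

theorem conditions_of_isMoorePenroseInverse_banachiewicz {d a e b s : R} (hd : IsSelfAdjoint d)
    (he : IsSelfAdjoint e) (hb : IsMoorePenroseInverse e b)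
    (hs : IsMoorePenroseInverse (d - a * b * star a) s)
    (h : IsMoorePenroseInverse !![d, a; star a, e] (banachiewicz !![d, a; star a, e] b s)) :
    a * b * e = a ∧ (d - a * b * star a) * s * a = a := by
  set S := d - a * b * star a
  have hb' : IsSelfAdjoint b := hb.isSelfAdjoint he
  have hS : IsSelfAdjoint S :=
    isSelfAdjoint_schurComplement (isSelfAdjoint_fin_two_iff.mpr ⟨hd, rfl, he⟩) hb'
  have hMN := fin_two_mul_banachiewicz d a (star a) e b s
  have hMNM : S * s * a + (a - S * s * a) * b * e = a := by
    simpa [hMN, mul_fin_two] using congr_fun₂ h.mul_inv_mul 0 1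
  have hMN_sa : star ((a - S * s * a) * b) = (star a - e * b * star a) * s := by
    have := h.isSelfAdjoint_mul_inv
    rw [hMN, isSelfAdjoint_fin_two_iff] at this
    exact this.2.1
  set n := a - S * s * a
  set m := a - a * b * e
  have hn : n * b * e = n := eq_sub_iff_add_eq'.mpr hMNM
  have hSn : S * n = 0 := by
    rw [mul_sub, ← mul_assoc, ← mul_assoc, mul_assoc S S, (hs.commute hS).eq, ← mul_assoc,
      hs.mul_inv_mul, sub_self]
  have hgm : star a - e * b * star a = star m := by
    simp only [m, star_sub, star_mul, he.star_eq, hb'.star_eq, mul_assoc]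
  have hsm : s * m = n * b := by
    rw [← star_star (n * b), hMN_sa, hgm, star_mul, star_star, (hs.isSelfAdjoint hS).star_eq]
  have hm : m = 0 :=
    calc m = m - S * (s * m) := by rw [hsm, ← mul_assoc, hSn, zero_mul, sub_zero]
      _ = n - n * b * e := by simp only [m, n]; noncomm_ring
      _ = 0 := by rw [hn, sub_self]
  have hnb : n * b = 0 := by
    rw [← star_star (n * b), hMN_sa, hgm, hm, star_zero, zero_mul, star_zero]
  refine ⟨(sub_eq_zero.mp hm).symm, (sub_eq_zero.mp ?_).symm⟩
  change n = 0
  rw [← hn, hnb, zero_mul]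

theorem isMoorePenroseInverse_banachiewicz {d a e b s : R} (hd : IsSelfAdjoint d)
    (he : IsSelfAdjoint e) (hb : IsMoorePenroseInverse e b)
    (hs : IsMoorePenroseInverse (d - a * b * star a) s)
    (hab : a * b * e = a) (hsa : (d - a * b * star a) * s * a = a) :
    IsMoorePenroseInverse !![d, a; star a, e] (banachiewicz !![d, a; star a, e] b s) := by
  set S := d - a * b * star a
  have hb' : IsSelfAdjoint b := hb.isSelfAdjoint he
  have hM : IsSelfAdjoint !![d, a; star a, e] := isSelfAdjoint_fin_two_iff.mpr ⟨hd, rfl, he⟩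
  have hS : IsSelfAdjoint S := isSelfAdjoint_schurComplement hM hb'
  have hN := isSelfAdjoint_banachiewicz hM hb' (hs.isSelfAdjoint hS)
  have hbsa : e * b * star a = star a := by
    simpa only [star_mul, he.star_eq, hb'.star_eq, mul_assoc] using congrArg star hab
  have hMN :
      !![d, a; star a, e] * banachiewicz !![d, a; star a, e] b s = !![S * s, 0; 0, e * b] := by
    rw [fin_two_mul_banachiewicz, hsa, hbsa, sub_self, sub_self]
    simp only [zero_mul, sub_zero]
    rfl
  have hMN_sa : IsSelfAdjoint (!![d, a; star a, e] * banachiewicz !![d, a; star a, e] b s) := by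
    rw [hMN]
    exact isSelfAdjoint_fin_two_iff.mpr
      ⟨hs.isSelfAdjoint_mul_inv, star_zero _, hb.isSelfAdjoint_mul_inv⟩
  have hSsd : S * s * d = d := by
    have hd' : d = S + a * b * star a := (sub_add_cancel d _).symm
    conv_lhs => rw [hd']
    rw [mul_add, hs.mul_inv_mul, ← mul_assoc, ← mul_assoc, hsa, ← hd']
  refine ⟨?_, ?_, ?_, ?_⟩
  · rw [mul_assoc, hMN, banachiewicz, mul_fin_two]
    have hsSs : s * (S * s) = s := by rw [← mul_assoc, hs.inv_mul_mul_inv]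
    have hbeb : b * (e * b) = b := by rw [← mul_assoc, hb.inv_mul_mul_inv]
    simp [add_mul, mul_assoc, hsSs, hbeb]
  · rw [hMN, mul_fin_two]
    simp [hSsd, hsa, hbsa, hb.mul_inv_mul]
  · have hNM : banachiewicz !![d, a; star a, e] b s * !![d, a; star a, e] =
        star (!![d, a; star a, e] * banachiewicz !![d, a; star a, e] b s) := by
      rw [star_mul, hM.star_eq, hN.star_eq]
    rw [hNM]
    exact IsSelfAdjoint.star_iff.mpr hMN_sa
  · exact hMN_sa

theorem isMoorePenroseInverse_banachiewicz_iff {M : Matrix (Fin 2) (Fin 2) R} {b s : R}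
    (hM : IsSelfAdjoint M) (hb : IsMoorePenroseInverse (M 1 1) b)
    (hs : IsMoorePenroseInverse (schurComplement M b) s) :
    IsMoorePenroseInverse M (banachiewicz M b s) ↔
      M 0 1 * b * M 1 1 = M 0 1 ∧ M 1 0 * s * schurComplement M b = M 1 0 := by
  obtain ⟨d, a, c, e, rfl⟩ : ∃ d a c e, M = !![d, a; c, e] := ⟨_, _, _, _, M.eta_fin_two⟩
  obtain ⟨hd, rfl, he⟩ := isSelfAdjoint_fin_two_iff.mp hM
  have hS := isSelfAdjoint_schurComplement hM (hb.isSelfAdjoint he)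
  have hs' := hs.isSelfAdjoint hS
  simp only [schurComplement, of_apply, cons_val', cons_val_zero, cons_val_one, empty_val',
    cons_val_fin_one] at hb hs hS hs' ⊢
  have hstar : star a * s * (d - a * b * star a) = star ((d - a * b * star a) * s * a) := by
    rw [star_mul, star_mul, hS.star_eq, hs'.star_eq, mul_assoc]
  rw [hstar, star_inj]
  exact ⟨conditions_of_isMoorePenroseInverse_banachiewicz hd he hb hs,
    fun h ↦ isMoorePenroseInverse_banachiewicz hd he hb hs h.1 h.2⟩

end StarRing

end Matrix

section Peirce

open Matrix

variable {R : Type*}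

section Ring
variable [Ring R]

def peirceMatrix (p y : R) : Matrix (Fin 2) (Fin 2) R :=
  of fun i j => ![p, 1 - p] i * y * ![p, 1 - p] j

theorem peirceMatrix_apply (p y : R) (i j : Fin 2) :
    peirceMatrix p y i j = ![p, 1 - p] i * y * ![p, 1 - p] j := rfl

theorem peirceMatrix_add (p y z : R) :
    peirceMatrix p (y + z) = peirceMatrix p y + peirceMatrix p z := by
  ext i j; simp [peirceMatrix, mul_add, add_mul]

theorem peirceMatrix_sub (p y z : R) :
    peirceMatrix p (y - z) = peirceMatrix p y - peirceMatrix p z := by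
  ext i j; simp [peirceMatrix, mul_sub, sub_mul]

theorem peirceMatrix_injective (p : R) : Function.Injective (peirceMatrix p) := by
  have hsum : ∀ y, y = peirceMatrix p y 0 0 + peirceMatrix p y 0 1 + peirceMatrix p y 1 0 +
      peirceMatrix p y 1 1 := by
    intro y
    simp only [peirceMatrix_apply, cons_val_zero, cons_val_one]
    noncomm_ring
  intro y z h
  rw [hsum y, hsum z, h]

variable {p : R}

theorem mul_peirce_proj (hp : IsIdempotentElem p) (i j : Fin 2) :
    ![p, 1 - p] i * ![p, 1 - p] j = if i = j then ![p, 1 - p] i else 0 := by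
  fin_cases i <;> fin_cases j <;>
    simp [hp.eq, hp.one_sub.eq, hp.mul_one_sub_self, hp.one_sub_mul_self]

theorem isIdempotentElem_peirce_proj (hp : IsIdempotentElem p) (i : Fin 2) :
    IsIdempotentElem (![p, 1 - p] i) :=
  (mul_peirce_proj hp i i).trans (if_pos rfl)

theorem peirceMatrix_mul (hp : IsIdempotentElem p) (y z : R) :
    peirceMatrix p (y * z) = peirceMatrix p y * peirceMatrix p z := by
  ext i j
  have hyz : y * z = y * p * p * z + y * (1 - p) * (1 - p) * z := by
    rw [mul_assoc y p p, hp.eq, mul_assoc y (1 - p), hp.one_sub.eq]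
    noncomm_ring
  simp only [peirceMatrix_apply, mul_apply, Fin.sum_univ_two, cons_val_zero, cons_val_one]
  rw [hyz]
  noncomm_ring

theorem peirce_proj_mul_peirceMatrix_apply (hp : IsIdempotentElem p) (y : R) (i j : Fin 2) :
    ![p, 1 - p] i * peirceMatrix p y i j = peirceMatrix p y i j := by
  rw [peirceMatrix_apply, ← mul_assoc, ← mul_assoc, (isIdempotentElem_peirce_proj hp i).eq]

theorem peirceMatrix_apply_mul_peirce_proj (hp : IsIdempotentElem p) (y : R) (i j : Fin 2) :
    peirceMatrix p y i j * ![p, 1 - p] j = peirceMatrix p y i j := by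
  rw [peirceMatrix_apply, mul_assoc, (isIdempotentElem_peirce_proj hp j).eq]

theorem peirce_proj_mul_peirceMatrix_apply_mul (hp : IsIdempotentElem p) (y : R) (i j : Fin 2) :
    ![p, 1 - p] i * peirceMatrix p y i j * ![p, 1 - p] j = peirceMatrix p y i j := by
  rw [peirce_proj_mul_peirceMatrix_apply hp, peirceMatrix_apply_mul_peirce_proj hp]

theorem peirceMatrix_eq_single (hp : IsIdempotentElem p) {i j : Fin 2} {y : R}
    (hy : ![p, 1 - p] i * y * ![p, 1 - p] j = y) : peirceMatrix p y = single i j y := by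
  ext k l
  rw [← hy, peirceMatrix_apply, single_apply,
    show ![p, 1 - p] k * (![p, 1 - p] i * y * ![p, 1 - p] j) * ![p, 1 - p] l =
      ![p, 1 - p] k * ![p, 1 - p] i * y * (![p, 1 - p] j * ![p, 1 - p] l) by simp only [mul_assoc],
    mul_peirce_proj hp, mul_peirce_proj hp]
  rcases eq_or_ne k i with rfl | hk <;> rcases eq_or_ne j l with rfl | hl <;>
    simp [*, Ne.symm]

theorem peirceMatrix_eq_banachiewicz_of_mul_mul_eq (hp : IsIdempotentElem p) {x b s : R}
    (hb : ![p, 1 - p] 1 * b * ![p, 1 - p] 1 = b) (hs : ![p, 1 - p] 0 * s * ![p, 1 - p] 0 = s) :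
    peirceMatrix p (s - s * peirceMatrix p x 0 1 * b - b * peirceMatrix p x 1 0 * s + b +
      b * peirceMatrix p x 1 0 * s * peirceMatrix p x 0 1 * b) =
      banachiewicz (peirceMatrix p x) b s := by
  have ha := peirceMatrix_eq_single hp (peirce_proj_mul_peirceMatrix_apply_mul hp x 0 1)
  have hc := peirceMatrix_eq_single hp (peirce_proj_mul_peirceMatrix_apply_mul hp x 1 0)
  have hb' : peirceMatrix p b = single 1 1 b := peirceMatrix_eq_single hp hb
  have hs' : peirceMatrix p s = single 0 0 s := peirceMatrix_eq_single hp hs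
  simp only [peirceMatrix_add, peirceMatrix_sub, peirceMatrix_mul hp, ha, hc, hb', hs',
    single_mul_single_same]
  ext i j
  fin_cases i <;> fin_cases j <;> simp [banachiewicz]

end Ring

section StarRing
variable [Ring R] [StarRing R] {p : R}

theorem peirceMatrix_star (hp : IsSelfAdjoint p) (y : R) :
    peirceMatrix p (star y) = star (peirceMatrix p y) := by
  ext i j
  fin_cases i <;> fin_cases j <;> simp [peirceMatrix, star_mul, hp.star_eq, mul_assoc]

theorem isMoorePenroseInverse_peirceMatrix_iff (hp : IsStarProjection p) {a b : R} :
    IsMoorePenroseInverse (peirceMatrix p a) (peirceMatrix p b) ↔ IsMoorePenroseInverse a b := by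
  simp only [isMoorePenroseInverse_iff, IsSelfAdjoint, ← peirceMatrix_mul hp.isIdempotentElem,
    ← peirceMatrix_star hp.isSelfAdjoint, (peirceMatrix_injective p).eq_iff]

theorem isSelfAdjoint_peirceMatrix (hp : IsSelfAdjoint p) {x : R} (hx : IsSelfAdjoint x) :
    IsSelfAdjoint (peirceMatrix p x) := by
  rw [IsSelfAdjoint, ← peirceMatrix_star hp, hx.star_eq]

theorem peirceMatrix_eq_banachiewicz (hp : IsStarProjection p) {x b s : R} (hx : IsSelfAdjoint x)
    (hb : IsMoorePenroseInverse (peirceMatrix p x 1 1) b)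
    (hs : IsMoorePenroseInverse (schurComplement (peirceMatrix p x) b) s) :
    peirceMatrix p (s - s * peirceMatrix p x 0 1 * b - b * peirceMatrix p x 1 0 * s + b +
      b * peirceMatrix p x 1 0 * s * peirceMatrix p x 0 1 * b) =
      banachiewicz (peirceMatrix p x) b s := by
  have hM := isSelfAdjoint_peirceMatrix hp.isSelfAdjoint hx
  have hM11 : IsSelfAdjoint (peirceMatrix p x 1 1) :=
    (isHermitian_iff_isSelfAdjoint.mpr hM).apply 1 1
  have hp' := hp.isIdempotentElem
  have hS : ![p, 1 - p] 0 * schurComplement (peirceMatrix p x) b * ![p, 1 - p] 0 =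
      schurComplement (peirceMatrix p x) b := by
    rw [schurComplement, mul_sub, sub_mul, peirce_proj_mul_peirceMatrix_apply_mul hp',
      mul_assoc, mul_assoc, peirceMatrix_apply_mul_peirce_proj hp', ← mul_assoc, ← mul_assoc,
      peirce_proj_mul_peirceMatrix_apply hp']
  exact peirceMatrix_eq_banachiewicz_of_mul_mul_eq hp'
    (hb.mul_mul_eq_of_mul_mul_eq hM11 (isIdempotentElem_peirce_proj hp' 1)
      (peirce_proj_mul_peirceMatrix_apply_mul hp' x 1 1))
    (hs.mul_mul_eq_of_mul_mul_eq (isSelfAdjoint_schurComplement hM (hb.isSelfAdjoint hM11))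
      (isIdempotentElem_peirce_proj hp' 0) hS)

theorem IsMoorePenroseInverse.peirceMatrix_eq_banachiewicz_iff (hp : IsStarProjection p)
    {x y b s : R} (hx : IsSelfAdjoint x) (hy : IsMoorePenroseInverse x y)
    (hb : IsMoorePenroseInverse (peirceMatrix p x 1 1) b)
    (hs : IsMoorePenroseInverse (schurComplement (peirceMatrix p x) b) s) :
    peirceMatrix p y = banachiewicz (peirceMatrix p x) b s ↔
      peirceMatrix p x 0 1 * b * peirceMatrix p x 1 1 = peirceMatrix p x 0 1 ∧
        peirceMatrix p x 1 0 * s * schurComplement (peirceMatrix p x) b =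
          peirceMatrix p x 1 0 := by
  have hM := isSelfAdjoint_peirceMatrix hp.isSelfAdjoint hx
  have hpy := (isMoorePenroseInverse_peirceMatrix_iff hp).mpr hy
  rw [← isMoorePenroseInverse_banachiewicz_iff hM hb hs]
  exact ⟨fun h ↦ h ▸ hpy, hpy.unique⟩

end StarRing

end Peirce

theorem stmt_13_general
    {𝕂 : Type*} [RCLike 𝕂]
    {H : Type*} [NormedAddCommGroup H] [InnerProductSpace 𝕂 H] [FiniteDimensional 𝕂 H]
    (P0 P1 : H →ₗ[𝕂] H)
    (hP0 : P0 ∘ₗ P0 = P0) (hP0sa : LinearMap.adjoint P0 = P0)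
    (hsum : P0 + P1 = 1)
    (X : H →ₗ[𝕂] H) (hXsa : LinearMap.adjoint X = X)
    (B : H →ₗ[𝕂] H)
    (hB1 : B ∘ₗ ((P1 ∘ₗ (X ∘ₗ P1)) ∘ₗ B) = B)
    (hB2 : (P1 ∘ₗ (X ∘ₗ P1)) ∘ₗ (B ∘ₗ (P1 ∘ₗ (X ∘ₗ P1))) = P1 ∘ₗ (X ∘ₗ P1))
    (hB3 : LinearMap.adjoint (B ∘ₗ (P1 ∘ₗ (X ∘ₗ P1))) = B ∘ₗ (P1 ∘ₗ (X ∘ₗ P1)))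
    (hB4 : LinearMap.adjoint ((P1 ∘ₗ (X ∘ₗ P1)) ∘ₗ B) = (P1 ∘ₗ (X ∘ₗ P1)) ∘ₗ B)
    (Sp : H →ₗ[𝕂] H)
    (hSp1 : Sp ∘ₗ (gschurLM P0 P1 X B ∘ₗ Sp) = Sp)
    (hSp2 : gschurLM P0 P1 X B ∘ₗ (Sp ∘ₗ gschurLM P0 P1 X B) = gschurLM P0 P1 X B)
    (hSp3 : LinearMap.adjoint (Sp ∘ₗ gschurLM P0 P1 X B) = Sp ∘ₗ gschurLM P0 P1 X B)
    (hSp4 : LinearMap.adjoint (gschurLM P0 P1 X B ∘ₗ Sp) = gschurLM P0 P1 X B ∘ₗ Sp)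
    (Xp : H →ₗ[𝕂] H)
    (hXp1 : Xp ∘ₗ (X ∘ₗ Xp) = Xp) (hXp2 : X ∘ₗ (Xp ∘ₗ X) = X)
    (hXp3 : LinearMap.adjoint (Xp ∘ₗ X) = Xp ∘ₗ X)
    (hXp4 : LinearMap.adjoint (X ∘ₗ Xp) = X ∘ₗ Xp) :
    ((Xp = Sp - Sp ∘ₗ ((P0 ∘ₗ (X ∘ₗ P1)) ∘ₗ B) - B ∘ₗ ((P1 ∘ₗ (X ∘ₗ P0)) ∘ₗ Sp) + B
          + B ∘ₗ ((P1 ∘ₗ (X ∘ₗ P0)) ∘ₗ (Sp ∘ₗ ((P0 ∘ₗ (X ∘ₗ P1)) ∘ₗ B)))) ↔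
      (LinearMap.ker (P1 ∘ₗ (X ∘ₗ P1)) ≤ LinearMap.ker (P0 ∘ₗ (X ∘ₗ P1)) ∧
        LinearMap.ker (gschurLM P0 P1 X B) ≤ LinearMap.ker (P1 ∘ₗ (X ∘ₗ P0)))) ∧
    ((LinearMap.ker (P1 ∘ₗ (X ∘ₗ P1)) ≤ LinearMap.ker (P0 ∘ₗ (X ∘ₗ P1)) ∧
        LinearMap.ker (gschurLM P0 P1 X B) ≤ LinearMap.ker (P1 ∘ₗ (X ∘ₗ P0))) →
      (P0 ∘ₗ (Xp ∘ₗ P0) = Sp ∧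
        gschurLM P0 P1 X B ∘ₗ ((P0 ∘ₗ (Xp ∘ₗ P0)) ∘ₗ gschurLM P0 P1 X B) =
          gschurLM P0 P1 X B ∧
        (P0 ∘ₗ (Xp ∘ₗ P0)) ∘ₗ (gschurLM P0 P1 X B ∘ₗ (P0 ∘ₗ (Xp ∘ₗ P0))) =
          P0 ∘ₗ (Xp ∘ₗ P0) ∧
        LinearMap.adjoint (gschurLM P0 P1 X B ∘ₗ (P0 ∘ₗ (Xp ∘ₗ P0))) =
          gschurLM P0 P1 X B ∘ₗ (P0 ∘ₗ (Xp ∘ₗ P0)) ∧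
        LinearMap.adjoint ((P0 ∘ₗ (Xp ∘ₗ P0)) ∘ₗ gschurLM P0 P1 X B) =
          (P0 ∘ₗ (Xp ∘ₗ P0)) ∘ₗ gschurLM P0 P1 X B)) := by
  obtain rfl : P1 = 1 - P0 := eq_sub_of_add_eq' hsum
  rw [LinearMap.ker_le_ker_iff_comp_eq _ hB2, LinearMap.ker_le_ker_iff_comp_eq _ hSp2]
  simp only [gschurLM, ← Module.End.mul_eq_comp, ← LinearMap.star_eq_adjoint] at *
  have hp : IsStarProjection P0 := ⟨hP0, hP0sa⟩
  have hXp : IsMoorePenroseInverse X Xp := by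
    simpa only [isMoorePenroseInverse_iff, mul_assoc] using ⟨hXp1, hXp2, hXp3, hXp4⟩
  have hb : IsMoorePenroseInverse (peirceMatrix P0 X 1 1) B := by
    simpa only [isMoorePenroseInverse_iff, peirceMatrix_apply, Matrix.cons_val_one,
      mul_assoc] using ⟨hB1, hB2, hB3, hB4⟩
  have hs : IsMoorePenroseInverse (Matrix.schurComplement (peirceMatrix P0 X) B) Sp := by
    simpa only [isMoorePenroseInverse_iff, Matrix.schurComplement, peirceMatrix_apply,
      Matrix.cons_val_zero, Matrix.cons_val_one, mul_assoc] using ⟨hSp1, hSp2, hSp3, hSp4⟩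
  have key := hXp.peirceMatrix_eq_banachiewicz_iff hp hXsa hb hs
  refine ⟨?_, fun hc ↦ ?_⟩
  · rw [← peirceMatrix_eq_banachiewicz hp hXsa hb hs, (peirceMatrix_injective P0).eq_iff] at key
    simpa only [peirceMatrix_apply, Matrix.schurComplement, Matrix.cons_val_zero,
      Matrix.cons_val_one, mul_assoc] using key
  · have h00 : P0 * (Xp * P0) = Sp := by
      have := congr_fun₂ (key.mpr (by
        simpa only [peirceMatrix_apply, Matrix.schurComplement, Matrix.cons_val_zero,
          Matrix.cons_val_one, mul_assoc] using hc)) 0 0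
      simpa [peirceMatrix_apply, Matrix.banachiewicz, mul_assoc] using this
    rw [h00]
    exact ⟨rfl, hSp2, hSp1, hSp4, hSp3⟩

/-- Generalized Banachiewicz inversion formula: let `X` be a
self-adjoint operator on a finite-dimensional inner product space `H = H₀ ⊕ H₁`
(orthogonal projections `P0, P1`, blocks `Xᵢⱼ = Pᵢ X Pⱼ`), let `B = X₁₁⁺`,
`S = X₀₀ - X₀₁X₁₁⁺X₁₀` the generalized Schur complement, `Sp = S⁺`, and `Xp = X⁺` (all
Moore–Penrose pseudoinverses, characterized by the four Penrose equations).  Then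
`X⁺ = [[S⁺, -S⁺X₀₁X₁₁⁺],[-X₁₁⁺X₁₀S⁺, X₁₁⁺ + X₁₁⁺X₁₀S⁺X₀₁X₁₁⁺]]` iff both
`ker X₁₁ ⊆ ker X₀₁` and `ker S ⊆ ker X₁₀`; and in that case `(X⁺)₀₀ = S⁺` and `S` is the
Moore–Penrose pseudoinverse of `(X⁺)₀₀`. -/
theorem stmt_13
    {𝕂 : Type*} [RCLike 𝕂]
    {H : Type*} [NormedAddCommGroup H] [InnerProductSpace 𝕂 H] [FiniteDimensional 𝕂 H]
    (P0 P1 : H →ₗ[𝕂] H)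
    (hP0 : P0 ∘ₗ P0 = P0) (hP0sa : LinearMap.adjoint P0 = P0)
    (hP1 : P1 ∘ₗ P1 = P1) (hP1sa : LinearMap.adjoint P1 = P1)
    (hsum : P0 + P1 = 1)
    (X : H →ₗ[𝕂] H) (hXsa : LinearMap.adjoint X = X)
    (B : H →ₗ[𝕂] H)
    (hB1 : B ∘ₗ ((P1 ∘ₗ (X ∘ₗ P1)) ∘ₗ B) = B)
    (hB2 : (P1 ∘ₗ (X ∘ₗ P1)) ∘ₗ (B ∘ₗ (P1 ∘ₗ (X ∘ₗ P1))) = P1 ∘ₗ (X ∘ₗ P1))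
    (hB3 : LinearMap.adjoint (B ∘ₗ (P1 ∘ₗ (X ∘ₗ P1))) = B ∘ₗ (P1 ∘ₗ (X ∘ₗ P1)))
    (hB4 : LinearMap.adjoint ((P1 ∘ₗ (X ∘ₗ P1)) ∘ₗ B) = (P1 ∘ₗ (X ∘ₗ P1)) ∘ₗ B)
    (Sp : H →ₗ[𝕂] H)
    (hSp1 : Sp ∘ₗ (gschurLM P0 P1 X B ∘ₗ Sp) = Sp)
    (hSp2 : gschurLM P0 P1 X B ∘ₗ (Sp ∘ₗ gschurLM P0 P1 X B) = gschurLM P0 P1 X B)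
    (hSp3 : LinearMap.adjoint (Sp ∘ₗ gschurLM P0 P1 X B) = Sp ∘ₗ gschurLM P0 P1 X B)
    (hSp4 : LinearMap.adjoint (gschurLM P0 P1 X B ∘ₗ Sp) = gschurLM P0 P1 X B ∘ₗ Sp)
    (Xp : H →ₗ[𝕂] H)
    (hXp1 : Xp ∘ₗ (X ∘ₗ Xp) = Xp) (hXp2 : X ∘ₗ (Xp ∘ₗ X) = X)
    (hXp3 : LinearMap.adjoint (Xp ∘ₗ X) = Xp ∘ₗ X)
    (hXp4 : LinearMap.adjoint (X ∘ₗ Xp) = X ∘ₗ Xp) :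
    ((Xp = Sp - Sp ∘ₗ ((P0 ∘ₗ (X ∘ₗ P1)) ∘ₗ B) - B ∘ₗ ((P1 ∘ₗ (X ∘ₗ P0)) ∘ₗ Sp) + B
          + B ∘ₗ ((P1 ∘ₗ (X ∘ₗ P0)) ∘ₗ (Sp ∘ₗ ((P0 ∘ₗ (X ∘ₗ P1)) ∘ₗ B)))) ↔
      (LinearMap.ker (P1 ∘ₗ (X ∘ₗ P1)) ≤ LinearMap.ker (P0 ∘ₗ (X ∘ₗ P1)) ∧
        LinearMap.ker (gschurLM P0 P1 X B) ≤ LinearMap.ker (P1 ∘ₗ (X ∘ₗ P0)))) ∧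
    ((LinearMap.ker (P1 ∘ₗ (X ∘ₗ P1)) ≤ LinearMap.ker (P0 ∘ₗ (X ∘ₗ P1)) ∧
        LinearMap.ker (gschurLM P0 P1 X B) ≤ LinearMap.ker (P1 ∘ₗ (X ∘ₗ P0))) →
      (P0 ∘ₗ (Xp ∘ₗ P0) = Sp ∧
        gschurLM P0 P1 X B ∘ₗ ((P0 ∘ₗ (Xp ∘ₗ P0)) ∘ₗ gschurLM P0 P1 X B) =
          gschurLM P0 P1 X B ∧
        (P0 ∘ₗ (Xp ∘ₗ P0)) ∘ₗ (gschurLM P0 P1 X B ∘ₗ (P0 ∘ₗ (Xp ∘ₗ P0))) =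
          P0 ∘ₗ (Xp ∘ₗ P0) ∧
        LinearMap.adjoint (gschurLM P0 P1 X B ∘ₗ (P0 ∘ₗ (Xp ∘ₗ P0))) =
          gschurLM P0 P1 X B ∘ₗ (P0 ∘ₗ (Xp ∘ₗ P0)) ∧
        LinearMap.adjoint ((P0 ∘ₗ (Xp ∘ₗ P0)) ∘ₗ gschurLM P0 P1 X B) =
          (P0 ∘ₗ (Xp ∘ₗ P0)) ∘ₗ gschurLM P0 P1 X B)) :=
  stmt_13_general P0 P1 hP0 hP0sa hsum X hXsa B hB1 hB2 hB3 hB4 Sp hSp1 hSp2 hSp3 hSp4 Xp hXp1 hXp2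
    hXp3 hXp4
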